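/- arXiv:2301.00186 — 3 statements merged into one kernel-verified Lean document; each statement's English description precedes it below -/
import Mathlib

section
/- Let H be a complex Hilbert space. There exists an absolute constant C such that for every N ∈ ℕ, every strictly increasing finite sequence n_0 < n_1 < ⋯ < n_N of positive integers, and every f : ℤ → H with ∑_{v∈ℤ} ‖f(v)‖^2 < ∞, one has ∑_{i=0}^{N-1} ∑_{v ∈ ℤ} ‖ M_{n_i} f(v) − M_{n_{i+1}} f(v) ‖^2 ≤ C ∑_{v∈ℤ} ‖f(v)‖^2. (This is the case p = 2 of Theorem 1.6, equivalently Proposition 4.6, in its full operator-valued generality, since L_2 of a semifinite von Neumann algebra is a Hilbert space.) -/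
open MeasureTheory Finset ENNReal

/-- The one-sided averaging operator on `ℤ` for Hilbert-space-valued functions:
`M_n f(v) = (1/(n+1)) ∑_{y=0}^{n} f(v+y)`. -/
noncomputable def avgZH {H : Type*} [NormedAddCommGroup H] [InnerProductSpace ℂ H]
    (n : ℕ) (f : ℤ → H) : ℤ → H :=
  fun v => ((n : ℝ) + 1)⁻¹ • ∑ y ∈ Finset.range (n + 1), f (v + (y : ℤ))

/-!
Parseval on the circle turns `avgZH n` into multiplication by `avgSymbol (e^{-2πix}) n`, so for
scalar `f` it suffices to bound `∑ i, |avgSymbol z (n i) - avgSymbol z (n (i + 1))|²` uniformly in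
`|z| ≤ 1`. Put `d = |z - 1|` and `K ≈ 4 / d`. Below `K` the symbol is `d`-Lipschitz in `n`, so a
jump from `a` to `b` costs at most `d² K (b - a)`. Above `K` the identity
  `(z - 1) (avgSymbol z a - avgSymbol z b)`
  `  = (z^(a+1) - z^(b+1)) / (a + 1) + (z^(b+1) - 1) (1 / (a + 1) - 1 / (b + 1))`
bounds the cost by `(8 / d) (1 / (a + 1) - 1 / (b + 1))`. Both bounds telescope along the
sequence. The Hilbert-space case follows coordinatewise in a Hilbert basis.
-/

open AddCircle

/-- `avgZH n` acts on Fourier series as multiplication by `avgSymbol (fourier (-1) x) n`. -/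
noncomputable def avgSymbol (z : ℂ) (n : ℕ) : ℂ := ((n : ℂ) + 1)⁻¹ * ∑ y ∈ range (n + 1), z ^ y

section NormedRing

variable {R : Type*} [NormedRing R] [NormOneClass R] {z : R}

lemma norm_pow_le_one (hz : ‖z‖ ≤ 1) (m : ℕ) : ‖z ^ m‖ ≤ 1 :=
  (norm_pow_le z m).trans (pow_le_one₀ (norm_nonneg z) hz)

lemma norm_geom_sum_le (hz : ‖z‖ ≤ 1) (m : ℕ) : ‖∑ i ∈ range m, z ^ i‖ ≤ m :=
  (norm_sum_le_of_le _ fun i _ => norm_pow_le_one hz i).trans (by simp)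

lemma norm_pow_sub_one_le (hz : ‖z‖ ≤ 1) (m : ℕ) : ‖z ^ m - 1‖ ≤ m * ‖z - 1‖ := by
  rw [← mul_geom_sum, mul_comm (m : ℝ)]
  exact (norm_mul_le _ _).trans (by gcongr; exact norm_geom_sum_le hz m)

lemma norm_pow_sub_pow_le (hz : ‖z‖ ≤ 1) {a b : ℕ} (hab : a ≤ b) :
    ‖z ^ a - z ^ b‖ ≤ (b - a : ℝ) * ‖z - 1‖ := by
  obtain ⟨c, rfl⟩ := Nat.exists_eq_add_of_le hab
  calc ‖z ^ a - z ^ (a + c)‖ = ‖z ^ a * (z ^ c - 1)‖ := by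
        rw [← norm_neg, pow_add, mul_sub, mul_one, neg_sub]
    _ ≤ 1 * (c * ‖z - 1‖) :=
        (norm_mul_le _ _).trans (by gcongr; exacts [norm_pow_le_one hz a, norm_pow_sub_one_le hz c])
    _ = _ := by push_cast; ring

end NormedRing

lemma norm_natCast_add_one (n : ℕ) : ‖(n : ℂ) + 1‖ = n + 1 := by
  exact_mod_cast Complex.norm_natCast (n + 1)

section avgSymbol

variable {z : ℂ}

@[simp]
lemma avgSymbol_one (n : ℕ) : avgSymbol 1 n = 1 := by
  simp [avgSymbol, inv_mul_cancel₀ (Nat.cast_add_one_ne_zero (R := ℂ) n)]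

@[fun_prop]
lemma continuous_avgSymbol (n : ℕ) : Continuous (avgSymbol · n) :=
  continuous_const.mul (continuous_finsetSum _ fun y _ => continuous_pow y)

lemma norm_avgSymbol_le_one (hz : ‖z‖ ≤ 1) (n : ℕ) : ‖avgSymbol z n‖ ≤ 1 := by
  rw [avgSymbol, norm_mul, norm_inv, norm_natCast_add_one, inv_mul_le_one₀ (by positivity)]
  exact_mod_cast norm_geom_sum_le hz (n + 1)

lemma sub_one_mul_avgSymbol_sub (z : ℂ) (a b : ℕ) :
    (z - 1) * (avgSymbol z a - avgSymbol z b) =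
      (z ^ (a + 1) - z ^ (b + 1)) * ((a : ℂ) + 1)⁻¹
        + (z ^ (b + 1) - 1) * (((a : ℂ) + 1)⁻¹ - ((b : ℂ) + 1)⁻¹) := by
  simp only [avgSymbol, mul_sub, mul_left_comm (z - 1), mul_geom_sum]
  ring

lemma avgSymbol_sub_avgSymbol_succ (z : ℂ) (k : ℕ) :
    avgSymbol z k - avgSymbol z (k + 1) = (avgSymbol z k - z ^ (k + 1)) / ((k : ℂ) + 2) := by
  have h₁ : (k : ℂ) + 1 ≠ 0 := Nat.cast_add_one_ne_zero k
  have h₂ : (k : ℂ) + 2 ≠ 0 := by exact_mod_cast Nat.succ_ne_zero (k + 1)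
  have hk : ((k + 1 : ℕ) : ℂ) + 1 = k + 2 := by push_cast; ring
  rw [avgSymbol, avgSymbol, hk, sum_range_succ _ (k + 1)]
  field_simp
  ring

lemma norm_avgSymbol_sub_pow_succ_le (hz : ‖z‖ ≤ 1) (k : ℕ) :
    ‖avgSymbol z k - z ^ (k + 1)‖ ≤ (k + 1) * ‖z - 1‖ := by
  have hmean : avgSymbol z k - z ^ (k + 1)
      = ((k : ℂ) + 1)⁻¹ * ∑ y ∈ range (k + 1), (z ^ y - z ^ (k + 1)) := by
    have : (k : ℂ) + 1 ≠ 0 := Nat.cast_add_one_ne_zero k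
    rw [sum_sub_distrib, sum_const, card_range, nsmul_eq_mul, avgSymbol]
    field_simp
    push_cast
    ring
  have hterm : ∀ y ∈ range (k + 1), ‖z ^ y - z ^ (k + 1)‖ ≤ (k + 1) * ‖z - 1‖ := by
    intro y hy
    calc ‖z ^ y - z ^ (k + 1)‖ ≤ ((k + 1 : ℕ) - y : ℝ) * ‖z - 1‖ :=
          norm_pow_sub_pow_le hz (mem_range.mp hy).le
      _ ≤ (k + 1) * ‖z - 1‖ := by push_cast; gcongr; linarith [y.cast_nonneg (α := ℝ)]
  rw [hmean, norm_mul, norm_inv, norm_natCast_add_one, inv_mul_le_iff₀ (by positivity)]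
  simpa [mul_assoc] using norm_sum_le_of_le _ hterm

lemma norm_avgSymbol_sub_succ_le (hz : ‖z‖ ≤ 1) (k : ℕ) :
    ‖avgSymbol z k - avgSymbol z (k + 1)‖ ≤ ‖z - 1‖ := by
  have hk : ‖(k : ℂ) + 2‖ = k + 2 := by exact_mod_cast Complex.norm_natCast (k + 2)
  rw [avgSymbol_sub_avgSymbol_succ, norm_div, hk, div_le_iff₀ (by positivity)]
  nlinarith [norm_avgSymbol_sub_pow_succ_le hz k, norm_nonneg (z - 1)]

lemma norm_avgSymbol_sub_le (hz : ‖z‖ ≤ 1) {a b : ℕ} (hab : a ≤ b) :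
    ‖avgSymbol z a - avgSymbol z b‖ ≤ (b - a : ℝ) * ‖z - 1‖ := by
  have := dist_le_Ico_sum_of_dist_le (f := avgSymbol z) (d := fun _ => ‖z - 1‖) hab
    fun _ _ => (dist_eq_norm _ _).trans_le (norm_avgSymbol_sub_succ_le hz _)
  simpa [dist_eq_norm, Nat.cast_sub hab] using this

lemma sq_norm_avgSymbol_sub_le_of_sub_le (hz : ‖z‖ ≤ 1) {a b : ℕ} (hab : a ≤ b) {K : ℝ}
    (hK : (b - a : ℝ) ≤ K) :
    ‖avgSymbol z a - avgSymbol z b‖ ^ 2 ≤ ‖z - 1‖ ^ 2 * K * (b - a) := by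
  have h₀ : (0 : ℝ) ≤ b - a := sub_nonneg.mpr (by exact_mod_cast hab)
  calc ‖avgSymbol z a - avgSymbol z b‖ ^ 2 ≤ ((b - a : ℝ) * ‖z - 1‖) ^ 2 := by
        gcongr; exact norm_avgSymbol_sub_le hz hab
    _ = ‖z - 1‖ ^ 2 * (b - a) * (b - a) := by ring
    _ ≤ ‖z - 1‖ ^ 2 * K * (b - a) := by gcongr

lemma norm_sub_one_mul_norm_avgSymbol_sub_le (hz : ‖z‖ ≤ 1) {a b : ℕ} (hab : a ≤ b) :
    ‖z - 1‖ * ‖avgSymbol z a - avgSymbol z b‖ ≤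
      ‖z ^ (a + 1) - z ^ (b + 1)‖ / (a + 1) + 2 * (((a : ℝ) + 1)⁻¹ - ((b : ℝ) + 1)⁻¹) := by
  have hg : 0 ≤ ((a : ℝ) + 1)⁻¹ - ((b : ℝ) + 1)⁻¹ := by rw [sub_nonneg]; gcongr
  have hcast : ((a : ℂ) + 1)⁻¹ - ((b : ℂ) + 1)⁻¹
      = ((((a : ℝ) + 1)⁻¹ - ((b : ℝ) + 1)⁻¹ : ℝ) : ℂ) := by
    push_cast; ring
  have hzb : ‖z ^ (b + 1) - 1‖ ≤ 2 :=
    (norm_sub_le _ _).trans (by linarith [norm_pow_le_one hz (b + 1), norm_one (α := ℂ)])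
  rw [← norm_mul, sub_one_mul_avgSymbol_sub, hcast]
  refine (norm_add_le _ _).trans ?_
  rw [norm_mul, norm_mul, Complex.norm_real, Real.norm_of_nonneg hg, norm_inv,
    norm_natCast_add_one, div_eq_mul_inv]
  gcongr

lemma sq_norm_avgSymbol_sub_le_of_four_le (hz : ‖z‖ ≤ 1) {a b : ℕ} (hab : a ≤ b)
    (ha : 4 ≤ ‖z - 1‖ * (a + 1)) :
    ‖avgSymbol z a - avgSymbol z b‖ ^ 2 ≤ 8 / ‖z - 1‖ * (((a : ℝ) + 1)⁻¹ - ((b : ℝ) + 1)⁻¹) := by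
  have hmain := norm_sub_one_mul_norm_avgSymbol_sub_le hz hab
  have hXd := norm_pow_sub_pow_le hz (Nat.succ_le_succ hab)
  have hX2 : ‖z ^ (a + 1) - z ^ (b + 1)‖ ≤ 2 :=
    (norm_sub_le _ _).trans (by linarith [norm_pow_le_one hz (a + 1), norm_pow_le_one hz (b + 1)])
  push_cast at hXd
  set d := ‖z - 1‖
  set X := ‖z ^ (a + 1) - z ^ (b + 1)‖
  set A : ℝ := a + 1
  set B : ℝ := b + 1
  have hA : 0 < A := by positivity
  have hAB : A ≤ B := by simp only [A, B]; gcongr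
  have hB : 0 < B := hA.trans_le hAB
  have hd : 0 < d := pos_of_mul_pos_left (by linarith) hA.le
  have hX0 : 0 ≤ X := norm_nonneg _
  have hg : A⁻¹ - B⁻¹ = (B - A) / (A * B) := inv_sub_inv hA.ne' hB.ne'
  have hg0 : 0 ≤ A⁻¹ - B⁻¹ := by rw [hg]; have := sub_nonneg.mpr hAB; positivity
  have hfirst : (X / A) ^ 2 ≤ 3 * d * (A⁻¹ - B⁻¹) := by
    have hBA : 0 ≤ B - A := sub_nonneg.mpr hAB
    -- `X² A ≤ 2 X A ≤ 2 d (B - A) A` and `X² (B - A) ≤ 4 (B - A) ≤ d A (B - A)`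
    have hXA : X ^ 2 * B ≤ 3 * d * (B - A) * A := by
      nlinarith [mul_le_mul_of_nonneg_right hXd hA.le, mul_le_mul_of_nonneg_right ha hBA,
        mul_le_mul_of_nonneg_right (show X ^ 2 ≤ 4 by nlinarith) hBA,
        mul_le_mul_of_nonneg_right (show X ^ 2 ≤ 2 * X by nlinarith) hA.le]
    rw [hg, div_pow, div_le_iff₀ (by positivity)]
    calc X ^ 2 = X ^ 2 * B / B := by field_simp
      _ ≤ 3 * d * (B - A) * A / B := by gcongr
      _ = _ := by field_simp
  have hsecond : (A⁻¹ - B⁻¹) ^ 2 ≤ d / 4 * (A⁻¹ - B⁻¹) := by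
    have : A⁻¹ ≤ d / 4 := by rw [inv_le_iff_one_le_mul₀ hA]; linarith
    nlinarith [inv_nonneg.mpr hB.le]
  rw [div_mul_eq_mul_div, le_div_iff₀ hd]
  have := mul_le_mul hmain hmain (by positivity) (by positivity)
  nlinarith [sq_nonneg (X / A - 2 * (A⁻¹ - B⁻¹))]

lemma sq_norm_avgSymbol_sub_le (hz : ‖z‖ ≤ 1) {K : ℕ} (hK : 4 ≤ ‖z - 1‖ * K)
    {a b : ℕ} (hab : a ≤ b) :
    ‖avgSymbol z a - avgSymbol z b‖ ^ 2 ≤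
      2 * ‖z - 1‖ ^ 2 * K * (min (b : ℝ) K - min (a : ℝ) K)
        + 16 / ‖z - 1‖ * ((max (a : ℝ) K + 1)⁻¹ - (max (b : ℝ) K + 1)⁻¹) := by
  set d := ‖z - 1‖
  have hd : 0 < d := pos_of_mul_pos_left (by linarith) K.cast_nonneg
  have hlarge {c : ℕ} (hc : K ≤ c) (hcb : c ≤ b) :
      ‖avgSymbol z c - avgSymbol z b‖ ^ 2 ≤ 8 / d * (((c : ℝ) + 1)⁻¹ - ((b : ℝ) + 1)⁻¹) :=
    sq_norm_avgSymbol_sub_le_of_four_le hz hcb <| hK.trans <| by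
      gcongr; exact (Nat.cast_le.mpr hc).trans (le_add_of_nonneg_right zero_le_one)
  rcases le_total b K with hbK | hKb
  · have hbK' : (b : ℝ) ≤ K := by exact_mod_cast hbK
    have haK : (a : ℝ) ≤ K := (Nat.cast_le.mpr hab).trans hbK'
    rw [min_eq_left hbK', min_eq_left haK, max_eq_right haK, max_eq_right hbK', sub_self,
      mul_zero, add_zero]
    have := sq_norm_avgSymbol_sub_le_of_sub_le hz hab (K := K)
      (by linarith [a.cast_nonneg (α := ℝ)])
    nlinarith [sq_nonneg d, K.cast_nonneg (α := ℝ), sub_nonneg.mpr (Nat.cast_le (α := ℝ).mpr hab)]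
  have hKb' : (K : ℝ) ≤ b := by exact_mod_cast hKb
  rcases le_total a K with haK | hKa
  · have haK' : (a : ℝ) ≤ K := by exact_mod_cast haK
    rw [min_eq_right hKb', min_eq_left haK', max_eq_right haK', max_eq_left hKb']
    set x := ‖avgSymbol z a - avgSymbol z K‖
    set y := ‖avgSymbol z K - avgSymbol z b‖
    calc ‖avgSymbol z a - avgSymbol z b‖ ^ 2 ≤ (x + y) ^ 2 := by
          gcongr; exact norm_sub_le_norm_sub_add_norm_sub _ _ _
      _ ≤ 2 * x ^ 2 + 2 * y ^ 2 := by linarith [sq_nonneg (x - y)]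
      _ ≤ 2 * (d ^ 2 * K * (K - a)) + 2 * (8 / d * (((K : ℝ) + 1)⁻¹ - ((b : ℝ) + 1)⁻¹)) := by
          gcongr
          · exact sq_norm_avgSymbol_sub_le_of_sub_le hz haK (by linarith [a.cast_nonneg (α := ℝ)])
          · exact hlarge le_rfl hKb
      _ = _ := by ring
  · have hKa' : (K : ℝ) ≤ a := by exact_mod_cast hKa
    rw [min_eq_right hKb', min_eq_right hKa', max_eq_left hKa', max_eq_left hKb', sub_self,
      mul_zero, zero_add]
    have hg : 0 ≤ ((a : ℝ) + 1)⁻¹ - ((b : ℝ) + 1)⁻¹ := by rw [sub_nonneg]; gcongr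
    calc ‖avgSymbol z a - avgSymbol z b‖ ^ 2 ≤ 8 / d * (((a : ℝ) + 1)⁻¹ - ((b : ℝ) + 1)⁻¹) :=
          hlarge hKa hab
      _ ≤ 16 / d * (((a : ℝ) + 1)⁻¹ - ((b : ℝ) + 1)⁻¹) := by gcongr; norm_num

theorem sum_sq_norm_avgSymbol_sub_le (hz : ‖z‖ ≤ 1) {n : ℕ → ℕ} (hn : Monotone n) (N : ℕ) :
    ∑ i ∈ range N, ‖avgSymbol z (n i) - avgSymbol z (n (i + 1))‖ ^ 2 ≤ 76 := by
  rcases eq_or_ne z 1 with rfl | hz1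
  · simp
  set d := ‖z - 1‖
  have hd : 0 < d := norm_pos_iff.mpr (sub_ne_zero.mpr hz1)
  have hd2 : d ≤ 2 := (norm_sub_le _ _).trans (by rw [norm_one]; linarith)
  set K := ⌈4 / d⌉₊
  have hK : 4 ≤ d * K := by
    have := Nat.le_ceil (4 / d); rw [div_le_iff₀ hd] at this; linarith
  have hK6 : d * K ≤ 6 := by
    have := mul_lt_mul_of_pos_left (Nat.ceil_lt_add_one (by positivity : 0 ≤ 4 / d)) hd
    rw [mul_add, mul_div_cancel₀ _ hd.ne', mul_one] at this
    linarith
  set ℓ : ℕ → ℝ := fun i => min (n i : ℝ) K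
  set φ : ℕ → ℝ := fun i => (max (n i : ℝ) K + 1)⁻¹
  calc ∑ i ∈ range N, ‖avgSymbol z (n i) - avgSymbol z (n (i + 1))‖ ^ 2
      ≤ ∑ i ∈ range N, (2 * d ^ 2 * K * (ℓ (i + 1) - ℓ i) + 16 / d * (φ i - φ (i + 1))) :=
        sum_le_sum fun i _ => sq_norm_avgSymbol_sub_le hz hK (hn i.le_succ)
    _ = 2 * d ^ 2 * K * (ℓ N - ℓ 0) + 16 / d * (φ 0 - φ N) := by
        rw [sum_add_distrib, ← mul_sum, ← mul_sum, sum_range_sub, sum_range_sub']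
    _ ≤ 2 * d ^ 2 * K * K + 16 / d * ((K : ℝ) + 1)⁻¹ := by
        gcongr
        · linarith [min_le_right (n N : ℝ) K, le_min (n 0).cast_nonneg (K.cast_nonneg (α := ℝ))]
        · have : 0 ≤ φ N := by simp only [φ]; positivity
          have : φ 0 ≤ ((K : ℝ) + 1)⁻¹ := by simp only [φ]; gcongr; exact le_max_right _ _
          linarith
    _ ≤ 76 := by
        have : 16 / d * ((K : ℝ) + 1)⁻¹ ≤ 4 := by
          rw [div_mul_eq_mul_div, ← div_eq_mul_inv, div_div, div_le_iff₀ (by positivity)]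
          nlinarith
        nlinarith

end avgSymbol

lemma ofReal_norm_sq {E : Type*} [SeminormedAddCommGroup E] (x : E) :
    ENNReal.ofReal (‖x‖ ^ 2) = ‖x‖ₑ ^ 2 := by
  rw [ENNReal.ofReal_pow (norm_nonneg _), ofReal_norm]

lemma HasSum.tsum_enorm_sq_eq_ofReal {ι E : Type*} [SeminormedAddCommGroup E] {g : ι → E} {a : ℝ}
    (h : HasSum (fun i => ‖g i‖ ^ 2) a) : ∑' i, ‖g i‖ₑ ^ 2 = ENNReal.ofReal a := by
  simp_rw [← h.tsum_eq, ENNReal.ofReal_tsum_of_nonneg (fun _ => by positivity) h.summable,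
    ofReal_norm_sq]

section Fourier

variable {T : ℝ} [Fact (0 < T)]

lemma fourierCoeff_fourier_smul {E : Type*} [NormedAddCommGroup E] [NormedSpace ℂ E]
    (F : AddCircle T → E) (k n : ℤ) :
    fourierCoeff (fun x => fourier k x • F x) n = fourierCoeff F (n - k) := by
  have : -n + k = -(n - k) := by ring
  simp only [fourierCoeff, smul_smul, ← fourier_add, this]

lemma fourierCoeff.sub {E : Type*} [NormedAddCommGroup E] [NormedSpace ℂ E]
    {f g : AddCircle T → E} (hf : Integrable f haarAddCircle) (hg : Integrable g haarAddCircle) :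
    fourierCoeff (f - g) = fourierCoeff f - fourierCoeff g := by
  ext n
  simp only [fourierCoeff, Pi.sub_apply, smul_sub]
  exact integral_sub (hf.fourier_smul _) (hg.fourier_smul _)

omit [Fact (0 < T)] in
lemma fourier_neg_natCast (y : ℕ) (x : AddCircle T) :
    fourier (-(y : ℤ)) x = fourier (-1) x ^ y := by
  induction y with
  | zero => simp
  | succ k ih => rw [pow_succ, ← ih, ← fourier_add]; push_cast; ring_nf

omit [Fact (0 < T)] in
lemma norm_fourier_apply (k : ℤ) (x : AddCircle T) : ‖fourier k x‖ = 1 := by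
  rw [fourier_apply, Circle.norm_coe]

lemma tsum_enorm_sq_fourierCoeff {g : AddCircle T → ℂ} (hg : MemLp g 2 haarAddCircle) :
    ∑' n, ‖fourierCoeff g n‖ₑ ^ 2 = ∫⁻ x, ‖g x‖ₑ ^ 2 ∂haarAddCircle := by
  have h := hasSum_sq_fourierCoeff (hg.toLp g)
  rw [fourierCoeff_congr_ae hg.coeFn_toLp,
    integral_congr_ae (hg.coeFn_toLp.mono fun x hx => by rw [hx])] at h
  rw [h.tsum_enorm_sq_eq_ofReal, ofReal_integral_eq_lintegral_ofReal
    ((memLp_two_iff_integrable_sq_norm hg.1).mp hg) (.of_forall fun _ => by positivity)]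
  simp_rw [ofReal_norm_sq]

lemma memLp_avgSymbol_fourier_mul {F : AddCircle T → ℂ} (hF : MemLp F 2 haarAddCircle) (m : ℕ) :
    MemLp (fun x => avgSymbol (fourier (-1) x) m * F x) 2 haarAddCircle :=
  hF.mul' <| memLp_top_of_bound (by fun_prop : Continuous _).aestronglyMeasurable 1 <|
    .of_forall fun x => norm_avgSymbol_le_one (norm_fourier_apply _ x).le m

lemma fourierCoeff_avgSymbol_fourier_mul {F : AddCircle T → ℂ} (hF : Integrable F haarAddCircle)
    (m : ℕ) (v : ℤ) :
    fourierCoeff (fun x => avgSymbol (fourier (-1) x) m * F x) v = avgZH m (fourierCoeff F) v := by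
  have hexpand : (fun x => avgSymbol (fourier (-1) x) m * F x)
      = ((m : ℂ) + 1)⁻¹ • ∑ y ∈ range (m + 1), fun x => fourier (-(y : ℤ)) x • F x := by
    ext x
    simp only [avgSymbol, Pi.smul_apply, Finset.sum_apply, smul_eq_mul, fourier_neg_natCast,
      sum_mul, mul_sum, mul_assoc]
  rw [hexpand, fourierCoeff.const_smul, fourierCoeff.sum _ _ fun y _ => hF.fourier_smul _,
    Finset.sum_apply, avgZH, ← Complex.coe_smul]
  simp only [fourierCoeff_fourier_smul, sub_neg_eq_add]
  push_cast
  rfl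

lemma tsum_enorm_sq_avgZH_fourierCoeff_sub {F : AddCircle T → ℂ} (hF : MemLp F 2 haarAddCircle)
    (a b : ℕ) :
    ∑' v, ‖avgZH a (fourierCoeff F) v - avgZH b (fourierCoeff F) v‖ₑ ^ 2 =
      ∫⁻ x, ‖avgSymbol (fourier (-1) x) a - avgSymbol (fourier (-1) x) b‖ₑ ^ 2 * ‖F x‖ₑ ^ 2
        ∂haarAddCircle := by
  have hGa := memLp_avgSymbol_fourier_mul hF a
  have hGb := memLp_avgSymbol_fourier_mul hF b
  calc ∑' v, ‖avgZH a (fourierCoeff F) v - avgZH b (fourierCoeff F) v‖ₑ ^ 2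
      = ∑' v, ‖fourierCoeff ((fun x => avgSymbol (fourier (-1) x) a * F x)
          - fun x => avgSymbol (fourier (-1) x) b * F x) v‖ₑ ^ 2 := by
        simp_rw [fourierCoeff.sub (hGa.integrable one_le_two) (hGb.integrable one_le_two),
          Pi.sub_apply, fourierCoeff_avgSymbol_fourier_mul (hF.integrable one_le_two)]
    _ = _ := by
        simp_rw [tsum_enorm_sq_fourierCoeff (hGa.sub hGb), Pi.sub_apply, ← sub_mul, enorm_mul,
          mul_pow]

end Fourier

theorem sum_tsum_enorm_sq_avgZH_sub_le (f : ℤ → ℂ) {n : ℕ → ℕ} (hn : Monotone n) (N : ℕ) :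
    ∑ i ∈ range N, ∑' v, ‖avgZH (n i) f v - avgZH (n (i + 1)) f v‖ₑ ^ 2
      ≤ 76 * ∑' v, ‖f v‖ₑ ^ 2 := by
  by_cases htop : ∑' v, ‖f v‖ₑ ^ 2 = ∞
  · rw [htop, ENNReal.mul_top (by norm_num)]
    exact le_top
  have hf : Memℓp f 2 := memℓp_gen <| by simpa [toReal_pow] using ENNReal.summable_toReal htop
  have : Fact ((0 : ℝ) < 1) := ⟨one_pos⟩
  set F : Lp ℂ 2 (haarAddCircle (T := 1)) := fourierBasis.repr.symm ⟨f, hf⟩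
  have hFf : fourierCoeff F = f := by
    ext v; rw [← fourierBasis_repr, LinearIsometryEquiv.apply_symm_apply]
  have hF : MemLp F 2 haarAddCircle := Lp.memLp F
  let p (i : ℕ) (x : AddCircle (1 : ℝ)) :=
    avgSymbol (fourier (-1) x) (n i) - avgSymbol (fourier (-1) x) (n (i + 1))
  have hp (x : AddCircle (1 : ℝ)) : ∑ i ∈ range N, ‖p i x‖ₑ ^ 2 ≤ 76 := by
    have h := ENNReal.ofReal_le_ofReal <|
      sum_sq_norm_avgSymbol_sub_le (norm_fourier_apply (-1) x).le hn N
    rw [ENNReal.ofReal_sum_of_nonneg fun _ _ => by positivity, ENNReal.ofReal_ofNat] at h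
    simpa only [ofReal_norm_sq] using h
  calc ∑ i ∈ range N, ∑' v, ‖avgZH (n i) f v - avgZH (n (i + 1)) f v‖ₑ ^ 2
      = ∑ i ∈ range N, ∫⁻ x, ‖p i x‖ₑ ^ 2 * ‖F x‖ₑ ^ 2 ∂haarAddCircle := by
        simp_rw [p, ← hFf, tsum_enorm_sq_avgZH_fourierCoeff_sub hF]
    _ = ∫⁻ x, (∑ i ∈ range N, ‖p i x‖ₑ ^ 2) * ‖F x‖ₑ ^ 2 ∂haarAddCircle := by
        simp_rw [sum_mul]
        refine (lintegral_finsetSum' _ fun i _ => ?_).symm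
        have hpi : Continuous (p i) := by fun_prop
        exact (hpi.measurable.enorm.pow_const 2).aemeasurable.mul
          (hF.aestronglyMeasurable.enorm.pow_const 2)
    _ ≤ ∫⁻ x, 76 * ‖F x‖ₑ ^ 2 ∂haarAddCircle := lintegral_mono fun x => by gcongr; exact hp x
    _ = 76 * ∑' v, ‖f v‖ₑ ^ 2 := by
        rw [lintegral_const_mul' _ _ (by norm_num), ← tsum_enorm_sq_fourierCoeff hF, hFf]

lemma HilbertBasis.tsum_enorm_inner_sq {ι 𝕜 E : Type*} [RCLike 𝕜] [NormedAddCommGroup E]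
    [InnerProductSpace 𝕜 E] (b : HilbertBasis ι 𝕜 E) (x : E) :
    ∑' i, ‖(inner 𝕜 (b i) x : 𝕜)‖ₑ ^ 2 = ‖x‖ₑ ^ 2 := by
  have h : HasSum (fun i => ‖b.repr x i‖ ^ 2) (‖b.repr x‖ ^ 2) := by
    exact_mod_cast lp.hasSum_norm (p := 2) (by simp) (b.repr x)
  simp only [b.repr_apply_apply, LinearIsometryEquiv.norm_map] at h
  rw [h.tsum_enorm_sq_eq_ofReal, ofReal_norm_sq]

lemma inner_avgZH {H : Type*} [NormedAddCommGroup H] [InnerProductSpace ℂ H] (x : H) (m : ℕ)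
    (f : ℤ → H) (v : ℤ) :
    (inner ℂ x (avgZH m f v) : ℂ) = avgZH m (fun u => (inner ℂ x (f u) : ℂ)) v := by
  rw [avgZH, avgZH, inner_smul_right_eq_smul, inner_sum]

/-- The `ℓ^2` square function inequality for the one-sided averaging operators on `ℤ`
with values in a complex Hilbert space (case `p = 2` of Theorem 1.6). -/
theorem square_function_L2_Z_Hilbert :
    ∃ C : ℝ, 0 < C ∧
      ∀ (H : Type) [NormedAddCommGroup H] [InnerProductSpace ℂ H] [CompleteSpace H],
      ∀ (N : ℕ) (n : ℕ → ℕ), StrictMono n → (∀ i, 0 < n i) →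
      ∀ f : ℤ → H, Summable (fun v => ‖f v‖ ^ 2) →
        ∑ i ∈ Finset.range N, ∑' v : ℤ,
            ((‖avgZH (n i) f v - avgZH (n (i + 1)) f v‖₊ : ℝ≥0∞) ^ 2)
          ≤ ENNReal.ofReal C * ∑' v : ℤ, ((‖f v‖₊ : ℝ≥0∞) ^ 2) := by
  refine ⟨76, by norm_num, fun H _ _ _ N n hn _ f _ => ?_⟩
  obtain ⟨ι, b, -⟩ := exists_hilbertBasis ℂ H
  let fb (e : ι) (u : ℤ) : ℂ := inner ℂ (b e) (f u)
  simp only [← enorm_eq_nnnorm, ENNReal.ofReal_ofNat]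
  calc ∑ i ∈ range N, ∑' v, ‖avgZH (n i) f v - avgZH (n (i + 1)) f v‖ₑ ^ 2
      = ∑' e, ∑ i ∈ range N, ∑' v, ‖avgZH (n i) (fb e) v - avgZH (n (i + 1)) (fb e) v‖ₑ ^ 2 := by
        simp_rw [← b.tsum_enorm_inner_sq, inner_sub_right, inner_avgZH, ENNReal.tsum_comm (α := ℤ)]
        exact (Summable.tsum_finsetSum fun _ _ => ENNReal.summable).symm
    _ ≤ ∑' e, 76 * ∑' v, ‖fb e v‖ₑ ^ 2 :=
        ENNReal.tsum_le_tsum fun e => sum_tsum_enorm_sq_avgZH_sub_le (fb e) hn.monotone N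
    _ = 76 * ∑' v, ‖f v‖ₑ ^ 2 := by
        rw [ENNReal.tsum_mul_left, ENNReal.tsum_comm]
        simp_rw [fb, b.tsum_enorm_inner_sq]
end

section
/- (Almost-orthogonality lemma, Hilbert-space form of Lemma 4.2.) Let H be a complex Hilbert space and, for each k ∈ ℤ and i ∈ ℕ, let S_{k,i} : H → H be a bounded linear operator. Let h ∈ H and let (u_n)_{n∈ℤ}, (v_n)_{n∈ℤ} be families in H such that h = ∑_{n∈ℤ} u_n (the series converging in H) and ∑_{n∈ℤ} ‖v_n‖^2 < ∞. Suppose there is a function σ : ℤ → [0, ∞) with w := ∑_{j∈ℤ} σ(j) < ∞ such that for all n, k ∈ ℤ: ( ∑_{i∈ℕ} ‖S_{k,i} u_n‖^2 )^{1/2} ≤ σ(n − k) ‖v_n‖. Then ∑_{k∈ℤ} ∑_{i∈ℕ} ‖S_{k,i} h‖^2 ≤ w^2 ∑_{n∈ℤ} ‖v_n‖^2. -/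
/-!
Bound `‖S k i h‖` by `∑ₙ ‖S k i (u n)‖` and apply Minkowski's inequality in `ℓ²(ℕ)`: the
`ℓ²`-norm of `(S k i h)ᵢ` is at most `∑ₙ σ (n - k) ‖v n‖`. What remains is Schur's test for the
convolution with `σ`, `∑ₖ (∑ₙ σ (n - k) bₙ)² ≤ (∑ σ)² ∑ₙ bₙ²`, which is Cauchy–Schwarz with the
weights `σ (n - k)` followed by an exchange of the sums over `k` and `n`. Working in `ℝ≥0∞`
makes every exchange of summation unconditional.
-/

open ENNReal

namespace ENNReal

variable {ι κ : Type*}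

theorem inner_le_L2_mul_L2_tsum (f g : ι → ℝ≥0∞) :
    ∑' i, f i * g i ≤ (∑' i, f i ^ 2) ^ (1 / 2 : ℝ) * (∑' i, g i ^ 2) ^ (1 / 2 : ℝ) := by
  let _ : MeasurableSpace ι := ⊤
  simp only [← rpow_two, ← MeasureTheory.lintegral_count' measurable_from_top]
  exact lintegral_mul_le_Lp_mul_Lq _ Real.HolderConjugate.two_two
    measurable_from_top.aemeasurable measurable_from_top.aemeasurable

theorem rpow_one_half_sq (x : ℝ≥0∞) : (x ^ (1 / 2 : ℝ)) ^ 2 = x := by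
  rw [← rpow_ofNat, ← rpow_mul]
  norm_num

theorem sq_tsum_mul_le_tsum_mul_tsum_mul_sq (a b : ι → ℝ≥0∞) :
    (∑' i, a i * b i) ^ 2 ≤ (∑' i, a i) * ∑' i, a i * b i ^ 2 := by
  have h := inner_le_L2_mul_L2_tsum (fun i => a i ^ (1 / 2 : ℝ)) (fun i => a i ^ (1 / 2 : ℝ) * b i)
  simp only [← mul_assoc, ← sq, mul_pow, rpow_one_half_sq] at h
  simpa only [mul_pow, rpow_one_half_sq] using pow_le_pow_left' h 2

theorem tsum_sq_tsum_le_sq_tsum_L2 (c : κ → ι → ℝ≥0∞) :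
    ∑' i, (∑' n, c n i) ^ 2 ≤ (∑' n, (∑' i, c n i ^ 2) ^ (1 / 2 : ℝ)) ^ 2 :=
  calc ∑' i, (∑' n, c n i) ^ 2
      = ∑' m, ∑' n, ∑' i, c n i * c m i := by
        simp only [sq, ← ENNReal.tsum_mul_right, ← ENNReal.tsum_mul_left]
        rw [ENNReal.tsum_comm]
        exact tsum_congr fun m => ENNReal.tsum_comm
    _ ≤ ∑' m, ∑' n, (∑' i, c n i ^ 2) ^ (1 / 2 : ℝ) * (∑' i, c m i ^ 2) ^ (1 / 2 : ℝ) :=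
        ENNReal.tsum_le_tsum fun m => ENNReal.tsum_le_tsum fun n =>
          inner_le_L2_mul_L2_tsum _ _
    _ = (∑' n, (∑' i, c n i ^ 2) ^ (1 / 2 : ℝ)) ^ 2 := by
        simp only [sq, ENNReal.tsum_mul_left, ENNReal.tsum_mul_right]

theorem tsum_sq_tsum_mul_sub_le {G : Type*} [AddGroup G] (a b : G → ℝ≥0∞) :
    ∑' k, (∑' n, a (n - k) * b n) ^ 2 ≤ (∑' j, a j) ^ 2 * ∑' n, b n ^ 2 := by
  have shift_right (k : G) : ∑' n, a (n - k) = ∑' j, a j := (Equiv.subRight k).tsum_eq a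
  have shift_left (n : G) : ∑' k, a (n - k) = ∑' j, a j := (Equiv.subLeft n).tsum_eq a
  calc ∑' k, (∑' n, a (n - k) * b n) ^ 2
      ≤ ∑' k, (∑' n, a (n - k)) * ∑' n, a (n - k) * b n ^ 2 :=
        ENNReal.tsum_le_tsum fun k => sq_tsum_mul_le_tsum_mul_tsum_mul_sq _ _
    _ = (∑' j, a j) * ∑' n, ∑' k, a (n - k) * b n ^ 2 := by
        simp only [shift_right]
        rw [ENNReal.tsum_mul_left, ENNReal.tsum_comm]
    _ = (∑' j, a j) ^ 2 * ∑' n, b n ^ 2 := by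
        simp only [ENNReal.tsum_mul_right, shift_left, ENNReal.tsum_mul_left, sq, mul_assoc]

theorem tsum_tsum_sq_le_of_L2_le {G ι : Type*} [AddGroup G] {x : G → ι → ℝ≥0∞}
    {c : G → G → ι → ℝ≥0∞} {a b : G → ℝ≥0∞} (hx : ∀ k i, x k i ≤ ∑' n, c n k i)
    (hc : ∀ n k, (∑' i, c n k i ^ 2) ^ (1 / 2 : ℝ) ≤ a (n - k) * b n) :
    ∑' k, ∑' i, x k i ^ 2 ≤ (∑' j, a j) ^ 2 * ∑' n, b n ^ 2 :=
  calc ∑' k, ∑' i, x k i ^ 2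
      ≤ ∑' k, ∑' i, (∑' n, c n k i) ^ 2 :=
        ENNReal.tsum_le_tsum fun k => ENNReal.tsum_le_tsum fun i => pow_le_pow_left' (hx k i) 2
    _ ≤ ∑' k, (∑' n, (∑' i, c n k i ^ 2) ^ (1 / 2 : ℝ)) ^ 2 :=
        ENNReal.tsum_le_tsum fun k => tsum_sq_tsum_le_sq_tsum_L2 fun n => c n k
    _ ≤ ∑' k, (∑' n, a (n - k) * b n) ^ 2 :=
        ENNReal.tsum_le_tsum fun k => pow_le_pow_left' (ENNReal.tsum_le_tsum fun n => hc n k) 2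
    _ ≤ (∑' j, a j) ^ 2 * ∑' n, b n ^ 2 := tsum_sq_tsum_mul_sub_le a b

end ENNReal

theorem almost_orthogonality_general
    {H : Type*} [NormedAddCommGroup H] [InnerProductSpace ℂ H]
    (S : ℤ → ℕ → (H →L[ℂ] H)) (h : H) (u v : ℤ → H)
    (hu : HasSum u h)
    (σ : ℤ → ℝ) (hσ : ∀ j, 0 ≤ σ j) (hσsum : Summable σ)
    (w : ℝ) (hw : w = ∑' j : ℤ, σ j)
    (hyp : ∀ n k : ℤ,
      (∑' i : ℕ, ((‖S k i (u n)‖₊ : ℝ≥0∞) ^ 2)) ^ (1 / 2 : ℝ)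
        ≤ ENNReal.ofReal (σ (n - k) * ‖v n‖)) :
    ∑' k : ℤ, ∑' i : ℕ, ((‖S k i h‖₊ : ℝ≥0∞) ^ 2)
      ≤ ENNReal.ofReal w ^ 2 * ∑' n : ℤ, ((‖v n‖₊ : ℝ≥0∞) ^ 2) := by
  have hSh (k : ℤ) (i : ℕ) : ‖S k i h‖ₑ ≤ ∑' n, ‖S k i (u n)‖ₑ :=
    ((S k i).hasSum hu).enorm_le_of_bounded ENNReal.summable.hasSum fun _ => le_rfl
  have hSu (n k : ℤ) :
      (∑' i, ‖S k i (u n)‖ₑ ^ 2) ^ (1 / 2 : ℝ) ≤ ENNReal.ofReal (σ (n - k)) * ‖v n‖ₑ := by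
    simpa only [ENNReal.ofReal_mul (hσ _), ofReal_norm, enorm_eq_nnnorm] using hyp n k
  rw [hw, ENNReal.ofReal_tsum_of_nonneg hσ hσsum]
  exact tsum_tsum_sq_le_of_L2_le hSh hSu

/-- Almost-orthogonality lemma (Hilbert-space form of Lemma 4.2). -/
theorem almost_orthogonality
    {H : Type*} [NormedAddCommGroup H] [InnerProductSpace ℂ H] [CompleteSpace H]
    (S : ℤ → ℕ → (H →L[ℂ] H)) (h : H) (u v : ℤ → H)
    (hu : HasSum u h) (hv : Summable (fun n => ‖v n‖ ^ 2))
    (σ : ℤ → ℝ) (hσ : ∀ j, 0 ≤ σ j) (hσsum : Summable σ)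
    (w : ℝ) (hw : w = ∑' j : ℤ, σ j)
    (hyp : ∀ n k : ℤ,
      (∑' i : ℕ, ((‖S k i (u n)‖₊ : ℝ≥0∞) ^ 2)) ^ (1 / 2 : ℝ)
        ≤ ENNReal.ofReal (σ (n - k) * ‖v n‖)) :
    ∑' k : ℤ, ∑' i : ℕ, ((‖S k i h‖₊ : ℝ≥0∞) ^ 2)
      ≤ ENNReal.ofReal w ^ 2 * ∑' n : ℤ, ((‖v n‖₊ : ℝ≥0∞) ^ 2) :=
  almost_orthogonality_general S h u v hu σ hσ hσsum w hw hyp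
end

section
/- (Commutative case of Lemma 1.4.) Let (X, μ) be a measure space and 1 ≤ p < ∞. Then there exists a constant C_p depending only on p such that for every bounded linear operator T : L^p(X, μ) → L^p(X, μ), every N ∈ ℕ, and every finite sequence x_1, …, x_N ∈ L^p(X, μ): ‖ ( ∑_{n=1}^{N} |T x_n|^2 )^{1/2} ‖_{L^p(X,μ)} ≤ C_p ‖T‖ ‖ ( ∑_{n=1}^{N} |x_n|^2 )^{1/2} ‖_{L^p(X,μ)}. That is, every bounded linear operator on L^p extends to a bounded operator on the ℓ^2-valued space L^p(X; ℓ^2) with norm at most C_p‖T‖. -/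
/-!
Averaging over the `2 ^ N` sign patterns, indexed by the subsets `s ⊆ range N` (sign `+1` on `s`),
Khintchine's inequalities make `2 ^ N (∑ |aₙ|²) ^ (q / 2)` comparable to `∑ₛ |∑ₙ ±ₛ aₙ| ^ q`, with
constants depending only on `q`. Applied pointwise to `T xₙ`, then integrated, this bounds the
square function of `T x` by the `L^p` norms of the signed sums `∑ₙ ±ₛ T xₙ = T (∑ₙ ±ₛ xₙ)`; these
are at most `‖T‖` times those of `∑ₙ ±ₛ xₙ`, and Khintchine again bounds these by the square
function of `x`.

The upper Khintchine inequality follows from the sub-Gaussian bound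
`∑ₛ exp (∑ₙ ±ₛ bₙ) ≤ 2 ^ N exp (∑ bₙ² / 2)` (from `cosh x ≤ exp (x² / 2)`) and `y ^ q ≤ q ^ q eʸ`.
The lower one follows from the orthogonality `∑ₛ |∑ₙ ±ₛ aₙ|² = 2 ^ N ∑ |aₙ|²`, by Jensen for `q ≥ 2`
and by Cauchy–Schwarz against the `(4 - q)`-th moment for `q < 2`.
-/

open MeasureTheory Finset ENNReal

section RademacherSum

variable {E F : Type*} [AddCommGroup E] [AddCommGroup F]

def rademacherSum (N : ℕ) (a : ℕ → E) (s : Finset ℕ) : E :=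
  ∑ n ∈ range N, if n ∈ s then a n else -a n

lemma map_rademacherSum {G : Type*} [FunLike G E F] [AddMonoidHomClass G E F] (g : G) (N : ℕ)
    (a : ℕ → E) (s : Finset ℕ) :
    g (rademacherSum N a s) = rademacherSum N (fun n => g (a n)) s := by
  simp only [rademacherSum, map_sum, apply_ite g, map_neg]

lemma rademacherSum_apply {X : Type*} (N : ℕ) (f : ℕ → X → E) (s : Finset ℕ) (x : X) :
    rademacherSum N f s x = rademacherSum N (fun n => f n x) s :=
  map_rademacherSum (Pi.evalAddMonoidHom (fun _ => E) x) N f s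

lemma rademacherSum_succ (N : ℕ) (a : ℕ → E) (s : Finset ℕ) :
    rademacherSum (N + 1) a s = rademacherSum N a s + if N ∈ s then a N else -a N :=
  sum_range_succ _ N

lemma rademacherSum_insert_self (N : ℕ) (a : ℕ → E) (s : Finset ℕ) :
    rademacherSum N a (insert N s) = rademacherSum N a s :=
  sum_congr rfl fun n hn => by simp [(mem_range.1 hn).ne]

lemma sum_powerset_rademacherSum_succ {M : Type*} [AddCommMonoid M] (f : E → M) (N : ℕ)
    (a : ℕ → E) :
    ∑ s ∈ (range (N + 1)).powerset, f (rademacherSum (N + 1) a s)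
      = ∑ s ∈ (range N).powerset,
          (f (rademacherSum N a s + a N) + f (rademacherSum N a s - a N)) := by
  rw [range_add_one, sum_powerset_insert notMem_range_self, ← sum_add_distrib]
  refine sum_congr rfl fun s hs => ?_
  have hN : N ∉ s := fun h => notMem_range_self (mem_powerset.1 hs h)
  rw [add_comm, rademacherSum_succ, rademacherSum_succ, rademacherSum_insert_self,
    if_pos (mem_insert_self N s), if_neg hN, sub_eq_add_neg]

lemma sum_powerset_norm_rademacherSum_sq {V : Type*} [NormedAddCommGroup V]
    [InnerProductSpace ℝ V] (N : ℕ) (a : ℕ → V) :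
    ∑ s ∈ (range N).powerset, ‖rademacherSum N a s‖ ^ 2
      = 2 ^ N * ∑ n ∈ range N, ‖a n‖ ^ 2 := by
  induction N with
  | zero => simp [rademacherSum]
  | succ N ih =>
    rw [sum_powerset_rademacherSum_succ (‖·‖ ^ 2), sum_range_succ, pow_succ]
    have hpar (x y : V) : ‖x + y‖ ^ 2 + ‖x - y‖ ^ 2 = 2 * ‖x‖ ^ 2 + 2 * ‖y‖ ^ 2 := by
      simpa only [sq, mul_add] using parallelogram_law_with_norm ℝ x y
    simp only [hpar, sum_add_distrib, ← mul_sum, ih, sum_const, card_powerset, card_range,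
      nsmul_eq_mul]
    push_cast
    ring

lemma sum_powerset_exp_rademacherSum_le (N : ℕ) (b : ℕ → ℝ) :
    ∑ s ∈ (range N).powerset, Real.exp (rademacherSum N b s)
      ≤ 2 ^ N * Real.exp ((∑ n ∈ range N, b n ^ 2) / 2) := by
  induction N with
  | zero => simp [rademacherSum]
  | succ N ih =>
    rw [sum_powerset_rademacherSum_succ Real.exp, sum_range_succ, pow_succ]
    calc ∑ s ∈ (range N).powerset,
          (Real.exp (rademacherSum N b s + b N) + Real.exp (rademacherSum N b s - b N))
        = 2 * Real.cosh (b N) * ∑ s ∈ (range N).powerset, Real.exp (rademacherSum N b s) := by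
          rw [mul_sum]
          refine sum_congr rfl fun s _ => ?_
          rw [Real.cosh_eq, Real.exp_add, Real.exp_sub, Real.exp_neg]
          field_simp
      _ ≤ 2 * Real.exp (b N ^ 2 / 2)
            * (2 ^ N * Real.exp ((∑ n ∈ range N, b n ^ 2) / 2)) := by
          gcongr
          exact Real.cosh_le_exp_half_sq _
      _ = _ := by rw [add_div, Real.exp_add]; ring

lemma sum_powerset_exp_clm_rademacherSum_le {V : Type*} [NormedAddCommGroup V]
    [NormedSpace ℝ V] (ℓ : V →L[ℝ] ℝ) (N : ℕ) (a : ℕ → V) :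
    ∑ s ∈ (range N).powerset, Real.exp (ℓ (rademacherSum N a s))
      ≤ 2 ^ N * Real.exp (‖ℓ‖ ^ 2 * (∑ n ∈ range N, ‖a n‖ ^ 2) / 2) := by
  simp only [map_rademacherSum]
  refine (sum_powerset_exp_rademacherSum_le N _).trans ?_
  rw [mul_sum]
  gcongr with n
  rw [← mul_pow, ← sq_abs, ← Real.norm_eq_abs]
  exact pow_le_pow_left₀ (norm_nonneg _) (ℓ.le_opNorm _) 2

lemma exp_norm_le_sum_exp_re_im (z : ℂ) :
    Real.exp ‖z‖ ≤ (Real.exp (2 * z.re) + Real.exp (-(2 * z.re))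
      + (Real.exp (2 * z.im) + Real.exp (-(2 * z.im)))) / 2 := by
  have hamgm : Real.exp (|z.re| + |z.im|)
      ≤ (Real.exp (2 * |z.re|) + Real.exp (2 * |z.im|)) / 2 := by
    rw [two_mul, two_mul, Real.exp_add, Real.exp_add, Real.exp_add]
    nlinarith [sq_nonneg (Real.exp |z.re| - Real.exp |z.im|)]
  calc Real.exp ‖z‖ ≤ Real.exp (|z.re| + |z.im|) :=
        Real.exp_le_exp.2 (Complex.norm_le_abs_re_add_abs_im z)
    _ ≤ (Real.exp (2 * |z.re|) + Real.exp (2 * |z.im|)) / 2 := hamgm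
    _ ≤ _ := by
      rw [← abs_two, ← abs_mul, ← abs_mul, abs_two]
      gcongr <;> exact Real.exp_abs_le _

lemma sum_powerset_exp_mul_norm_rademacherSum_le {c : ℝ} (hc : 0 ≤ c) (N : ℕ) (a : ℕ → ℂ) :
    ∑ s ∈ (range N).powerset, Real.exp (c * ‖rademacherSum N a s‖)
      ≤ 2 * 2 ^ N * Real.exp (2 * c ^ 2 * ∑ n ∈ range N, ‖a n‖ ^ 2) := by
  set B := 2 ^ N * Real.exp (2 * c ^ 2 * ∑ n ∈ range N, ‖a n‖ ^ 2)
  have hclm (d : ℝ) (hd : |d| = 2 * c) (ℓ : ℂ →L[ℝ] ℝ) (hℓ : ‖ℓ‖ = 1) :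
      ∑ s ∈ (range N).powerset, Real.exp (d * ℓ (rademacherSum N a s)) ≤ B := by
    convert sum_powerset_exp_clm_rademacherSum_le (d • ℓ) N a using 3
    · rfl
    · rw [norm_smul, hℓ, Real.norm_eq_abs, hd]; ring
  have hpos : |2 * c| = 2 * c := abs_of_nonneg (by positivity)
  have hneg : |-(2 * c)| = 2 * c := by rw [abs_neg, hpos]
  calc ∑ s ∈ (range N).powerset, Real.exp (c * ‖rademacherSum N a s‖)
      ≤ ∑ s ∈ (range N).powerset,
          (Real.exp (2 * c * Complex.reCLM (rademacherSum N a s))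
            + Real.exp (-(2 * c) * Complex.reCLM (rademacherSum N a s))
            + (Real.exp (2 * c * Complex.imCLM (rademacherSum N a s))
              + Real.exp (-(2 * c) * Complex.imCLM (rademacherSum N a s)))) / 2 := by
        gcongr with s
        simpa [norm_mul, abs_of_nonneg hc, neg_mul, mul_assoc] using
          exp_norm_le_sum_exp_re_im (c * rademacherSum N a s)
    _ ≤ (B + B + (B + B)) / 2 := by
        simp only [← sum_div, sum_add_distrib]
        gcongr
        · exact hclm _ hpos _ Complex.reCLM_norm
        · exact hclm _ hneg _ Complex.reCLM_norm
        · exact hclm _ hpos _ Complex.imCLM_norm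
        · exact hclm _ hneg _ Complex.imCLM_norm
    _ = 2 * 2 ^ N * Real.exp (2 * c ^ 2 * ∑ n ∈ range N, ‖a n‖ ^ 2) := by ring

lemma rpow_le_rpow_mul_exp {y q : ℝ} (hy : 0 ≤ y) (hq : 0 < q) : y ^ q ≤ q ^ q * Real.exp y := by
  have h : y / q ≤ Real.exp (y / q) := by linarith [Real.add_one_le_exp (y / q)]
  have h' := Real.rpow_le_rpow (by positivity) h hq.le
  rwa [Real.div_rpow hy hq.le, ← Real.exp_mul, div_mul_cancel₀ y hq.ne',
    div_le_iff₀ (by positivity), mul_comm] at h'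

lemma sum_powerset_norm_rademacherSum_rpow_le {q : ℝ} (hq : 0 < q) (N : ℕ) (a : ℕ → ℂ) :
    ∑ s ∈ (range N).powerset, ‖rademacherSum N a s‖ ^ q
      ≤ 2 * Real.exp 2 * q ^ q * (2 ^ N * (∑ n ∈ range N, ‖a n‖ ^ 2) ^ (q / 2)) := by
  set σ := ∑ n ∈ range N, ‖a n‖ ^ 2
  have hσ0 : 0 ≤ σ := sum_nonneg fun n _ => sq_nonneg ‖a n‖
  rcases hσ0.eq_or_lt with hσ | hσ
  · have hR : ∀ s ∈ (range N).powerset, rademacherSum N a s = 0 := by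
      have h : ∑ s ∈ (range N).powerset, ‖rademacherSum N a s‖ ^ 2 = 2 ^ N * σ :=
        sum_powerset_norm_rademacherSum_sq N a
      rw [← hσ, mul_zero, sum_eq_zero_iff_of_nonneg fun s _ => sq_nonneg _] at h
      exact fun s hs => norm_eq_zero.1 (pow_eq_zero_iff two_ne_zero |>.1 (h s hs))
    rw [sum_congr rfl fun s hs => by rw [hR s hs, norm_zero, Real.zero_rpow hq.ne'],
      sum_const_zero]
    positivity
  set t := σ ^ (1 / 2 : ℝ)
  have ht : 0 < t := Real.rpow_pos_of_pos hσ _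
  have htσ : t⁻¹ ^ 2 * σ = 1 := by
    rw [inv_pow, ← Real.rpow_natCast, ← Real.rpow_mul hσ.le, Nat.cast_ofNat,
      one_div_mul_cancel two_ne_zero, Real.rpow_one, inv_mul_cancel₀ hσ.ne']
  calc ∑ s ∈ (range N).powerset, ‖rademacherSum N a s‖ ^ q
      ≤ ∑ s ∈ (range N).powerset,
          t ^ q * (q ^ q * Real.exp (t⁻¹ * ‖rademacherSum N a s‖)) := by
        gcongr with s
        conv_lhs => rw [← mul_inv_cancel_left₀ ht.ne' ‖rademacherSum N a s‖,
          Real.mul_rpow ht.le (by positivity)]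
        gcongr
        exact rpow_le_rpow_mul_exp (by positivity) hq
    _ ≤ t ^ q * (q ^ q * (2 * 2 ^ N * Real.exp (2 * (t⁻¹ ^ 2 * σ)))) := by
        rw [← mul_sum, ← mul_sum, ← mul_assoc 2]
        gcongr
        exact sum_powerset_exp_mul_norm_rademacherSum_le (inv_nonneg.2 ht.le) N a
    _ = 2 * Real.exp 2 * q ^ q * (2 ^ N * σ ^ (q / 2)) := by
        rw [htσ, ← Real.rpow_mul hσ.le, one_div_mul_eq_div, mul_one]; ring

lemma sq_rpow_half {x : ℝ} (hx : 0 ≤ x) (q : ℝ) : (x ^ 2) ^ (q / 2) = x ^ q := by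
  rw [← Real.rpow_natCast_mul hx, Nat.cast_ofNat, mul_div_cancel₀ q two_ne_zero]

lemma two_pow_mul_rpow_le_sum_powerset_norm_rademacherSum_rpow_of_two_le {V : Type*}
    [NormedAddCommGroup V] [InnerProductSpace ℝ V] {q : ℝ} (hq : 2 ≤ q) (N : ℕ) (a : ℕ → V) :
    2 ^ N * (∑ n ∈ range N, ‖a n‖ ^ 2) ^ (q / 2)
      ≤ ∑ s ∈ (range N).powerset, ‖rademacherSum N a s‖ ^ q := by
  have h2N : (0 : ℝ) < 2 ^ N := by positivity
  have hw : ∑ s ∈ (range N).powerset, ((2 : ℝ) ^ N)⁻¹ = 1 := by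
    rw [sum_const, card_powerset, card_range, nsmul_eq_mul, Nat.cast_pow, Nat.cast_ofNat,
      mul_inv_cancel₀ h2N.ne']
  have hjensen := Real.rpow_arith_mean_le_arith_mean_rpow (range N).powerset
    (fun _ => ((2 : ℝ) ^ N)⁻¹) (fun s => ‖rademacherSum N a s‖ ^ 2) (fun _ _ => by positivity)
    hw (fun _ _ => by positivity) (by linarith : 1 ≤ q / 2)
  simp only [← mul_sum, sum_powerset_norm_rademacherSum_sq, inv_mul_cancel_left₀ h2N.ne',
    sq_rpow_half (norm_nonneg _)] at hjensen
  rwa [← le_inv_mul_iff₀ h2N]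

lemma two_pow_mul_rpow_le_mul_sum_powerset_norm_rademacherSum_rpow_of_lt_four {q : ℝ}
    (hq : 0 < q) (hq4 : q < 4) (N : ℕ) (a : ℕ → ℂ) :
    2 ^ N * (∑ n ∈ range N, ‖a n‖ ^ 2) ^ (q / 2)
      ≤ 2 * Real.exp 2 * (4 - q) ^ (4 - q)
          * ∑ s ∈ (range N).powerset, ‖rademacherSum N a s‖ ^ q := by
  set σ := ∑ n ∈ range N, ‖a n‖ ^ 2
  have hσ0 : 0 ≤ σ := sum_nonneg fun n _ => sq_nonneg ‖a n‖
  rcases hσ0.eq_or_lt with hσ | hσ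
  · rw [← hσ, Real.zero_rpow (by positivity), mul_zero]
    positivity
  have hcs : (∑ s ∈ (range N).powerset, ‖rademacherSum N a s‖ ^ 2) ^ 2
      ≤ (∑ s ∈ (range N).powerset, ‖rademacherSum N a s‖ ^ q)
        * ∑ s ∈ (range N).powerset, ‖rademacherSum N a s‖ ^ (4 - q) := by
    refine sum_sq_le_sum_mul_sum_of_sq_le_mul _ (fun _ _ => by positivity)
      (fun _ _ => by positivity) fun s _ => le_of_eq ?_
    rw [← Real.rpow_add' (norm_nonneg _) (by norm_num), add_sub_cancel, ← pow_mul]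
    exact_mod_cast (Real.rpow_natCast _ 4).symm
  have hupper := sum_powerset_norm_rademacherSum_rpow_le (sub_pos.2 hq4) N a
  have hσsq : σ ^ 2 = σ ^ (q / 2) * σ ^ ((4 - q) / 2) := by
    rw [← Real.rpow_add hσ, ← Real.rpow_two]; ring_nf
  rw [sum_powerset_norm_rademacherSum_sq, mul_pow, hσsq] at hcs
  refine le_of_mul_le_mul_right (a := 2 ^ N * σ ^ ((4 - q) / 2)) ?_ (by positivity)
  calc 2 ^ N * σ ^ (q / 2) * (2 ^ N * σ ^ ((4 - q) / 2))
      = ((2 : ℝ) ^ N) ^ 2 * (σ ^ (q / 2) * σ ^ ((4 - q) / 2)) := by ring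
    _ ≤ _ := hcs.trans (mul_le_mul_of_nonneg_left hupper (by positivity))
    _ = _ := by ring

lemma exists_two_pow_mul_rpow_le_mul_sum_powerset_norm_rademacherSum_rpow {q : ℝ}
    (hq : 0 < q) :
    ∃ C > 0, ∀ (N : ℕ) (a : ℕ → ℂ), 2 ^ N * (∑ n ∈ range N, ‖a n‖ ^ 2) ^ (q / 2)
      ≤ C * ∑ s ∈ (range N).powerset, ‖rademacherSum N a s‖ ^ q := by
  rcases lt_or_ge q 2 with hq2 | hq2
  · have hq4 : 0 < 4 - q := by linarith
    exact ⟨_, by positivity,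
      two_pow_mul_rpow_le_mul_sum_powerset_norm_rademacherSum_rpow_of_lt_four hq (by linarith)⟩
  · exact ⟨1, one_pos, fun N a => by
      simpa using two_pow_mul_rpow_le_sum_powerset_norm_rademacherSum_rpow_of_two_le hq2 N a⟩

end RademacherSum

lemma ENNReal.le_ofReal_rpow_inv_mul_of_rpow_le {a b : ℝ≥0∞} {C r : ℝ} (hC : 0 ≤ C)
    (hr : 0 < r) (h : a ^ r ≤ ENNReal.ofReal C * b ^ r) : a ≤ ENNReal.ofReal (C ^ r⁻¹) * b := by
  rwa [← ENNReal.ofReal_rpow_of_nonneg hC (by positivity), ← ENNReal.rpow_le_rpow_iff hr,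
    ENNReal.mul_rpow_of_nonneg _ _ hr.le, ← ENNReal.rpow_mul, inv_mul_cancel₀ hr.ne',
    ENNReal.rpow_one]

section SquareFunction

variable {X : Type*} [MeasurableSpace X] {μ : Measure X} {p : ℝ≥0∞}

lemma eLpNorm_rpow_toReal_eq_lintegral {E : Type*} [NormedAddCommGroup E] (hp0 : p ≠ 0)
    (hp : p ≠ ∞) (g : X → E) :
    eLpNorm g p μ ^ p.toReal = ∫⁻ ω, ENNReal.ofReal (‖g ω‖ ^ p.toReal) ∂μ := by
  have h := eLpNorm_nnreal_pow_eq_lintegral (μ := μ) (f := g) (p := p.toNNReal)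
    (by simp [ENNReal.toNNReal_eq_zero_iff, hp0, hp])
  rw [ENNReal.coe_toNNReal hp, ENNReal.coe_toNNReal_eq_toReal] at h
  rw [h]
  congr 1 with ω
  rw [← ofReal_norm, ENNReal.ofReal_rpow_of_nonneg (norm_nonneg _) ENNReal.toReal_nonneg]

noncomputable def squareFunction {E : Type*} [NormedAddCommGroup E] (N : ℕ) (f : ℕ → X → E)
    (ω : X) : ℝ :=
  (∑ m ∈ range N, ‖f m ω‖ ^ 2) ^ (1 / 2 : ℝ)

variable {E : Type*} [NormedAddCommGroup E]

lemma two_pow_mul_eLpNorm_squareFunction_rpow (hp0 : p ≠ 0) (hp : p ≠ ∞) (N : ℕ)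
    (f : ℕ → X → E) :
    2 ^ N * eLpNorm (squareFunction N f) p μ ^ p.toReal
      = ∫⁻ ω, ENNReal.ofReal (2 ^ N * (∑ m ∈ range N, ‖f m ω‖ ^ 2) ^ (p.toReal / 2)) ∂μ := by
  rw [eLpNorm_rpow_toReal_eq_lintegral hp0 hp, ← lintegral_const_mul' _ _ (by simp)]
  congr 1 with ω
  have hσ : 0 ≤ ∑ m ∈ range N, ‖f m ω‖ ^ 2 := sum_nonneg fun m _ => sq_nonneg _
  rw [ENNReal.ofReal_mul (by positivity), ENNReal.ofReal_pow zero_le_two, ENNReal.ofReal_ofNat,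
    squareFunction, Real.norm_of_nonneg (by positivity), ← Real.rpow_mul hσ, one_div_mul_eq_div]

lemma aestronglyMeasurable_rademacherSum {f : ℕ → X → E}
    (hf : ∀ n, AEStronglyMeasurable (f n) μ) (N : ℕ) (s : Finset ℕ) :
    AEStronglyMeasurable (rademacherSum N f s) μ :=
  Finset.aestronglyMeasurable_sum _ fun n _ => by split_ifs; exacts [hf n, (hf n).neg]

lemma sum_powerset_eLpNorm_rademacherSum_rpow (hp0 : p ≠ 0) (hp : p ≠ ∞) {f : ℕ → X → E}
    (hf : ∀ n, AEStronglyMeasurable (f n) μ) (N : ℕ) :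
    ∑ s ∈ (range N).powerset, eLpNorm (rademacherSum N f s) p μ ^ p.toReal
      = ∫⁻ ω, ENNReal.ofReal (∑ s ∈ (range N).powerset,
          ‖rademacherSum N (fun n => f n ω) s‖ ^ p.toReal) ∂μ := by
  simp only [eLpNorm_rpow_toReal_eq_lintegral hp0 hp, ← rademacherSum_apply]
  rw [← lintegral_finsetSum' _ fun s _ =>
    ((aestronglyMeasurable_rademacherSum hf N s).norm.aemeasurable.pow_const _).ennreal_ofReal]
  congr 1 with ω
  rw [ENNReal.ofReal_sum_of_nonneg fun s _ => by positivity]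

lemma two_pow_mul_eLpNorm_squareFunction_rpow_le (hp0 : p ≠ 0) (hp : p ≠ ∞) {N : ℕ} {C : ℝ}
    (hC : ∀ a : ℕ → E, 2 ^ N * (∑ n ∈ range N, ‖a n‖ ^ 2) ^ (p.toReal / 2)
      ≤ C * ∑ s ∈ (range N).powerset, ‖rademacherSum N a s‖ ^ p.toReal)
    {f : ℕ → X → E} (hf : ∀ n, AEStronglyMeasurable (f n) μ) :
    2 ^ N * eLpNorm (squareFunction N f) p μ ^ p.toReal
      ≤ ENNReal.ofReal C
          * ∑ s ∈ (range N).powerset, eLpNorm (rademacherSum N f s) p μ ^ p.toReal := by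
  rw [two_pow_mul_eLpNorm_squareFunction_rpow hp0 hp,
    sum_powerset_eLpNorm_rademacherSum_rpow hp0 hp hf, ← lintegral_const_mul' _ _ ofReal_ne_top]
  exact lintegral_mono fun ω =>
    (ENNReal.ofReal_le_ofReal (hC _)).trans_eq (ENNReal.ofReal_mul' (by positivity))

lemma sum_powerset_eLpNorm_rademacherSum_rpow_le (hp0 : p ≠ 0) (hp : p ≠ ∞) {f : ℕ → X → ℂ}
    (hf : ∀ n, AEStronglyMeasurable (f n) μ) (N : ℕ) :
    ∑ s ∈ (range N).powerset, eLpNorm (rademacherSum N f s) p μ ^ p.toReal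
      ≤ ENNReal.ofReal (2 * Real.exp 2 * p.toReal ^ p.toReal)
          * (2 ^ N * eLpNorm (squareFunction N f) p μ ^ p.toReal) := by
  rw [two_pow_mul_eLpNorm_squareFunction_rpow hp0 hp,
    sum_powerset_eLpNorm_rademacherSum_rpow hp0 hp hf, ← lintegral_const_mul' _ _ ofReal_ne_top]
  exact lintegral_mono fun ω =>
    (ENNReal.ofReal_le_ofReal (sum_powerset_norm_rademacherSum_rpow_le
      (ENNReal.toReal_pos hp0 hp) N _)).trans_eq (ENNReal.ofReal_mul (by positivity))

lemma Lp.coeFn_rademacherSum (N : ℕ) (y : ℕ → Lp E p μ) (s : Finset ℕ) :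
    ⇑(rademacherSum N y s) =ᵐ[μ] rademacherSum N (fun n => ⇑(y n)) s := by
  rw [← Filter.Germ.coe_eq, ← AEEqFun.toGerm_eq]
  have h := map_rademacherSum (AEEqFun.toGermAddMonoidHom.comp (Lp E p μ).subtype) N y s
  have h' := map_rademacherSum (Filter.Germ.coeAddHom (ae μ)) N (fun n => ⇑(y n)) s
  exact h.trans (by simpa [AEEqFun.toGerm_eq] using h'.symm)

lemma eLpNorm_rademacherSum_map_le [Fact (1 ≤ p)] {𝕜 F : Type*} [NontriviallyNormedField 𝕜]
    [NormedSpace 𝕜 E] [NormedAddCommGroup F] [NormedSpace 𝕜 F] {Y : Type*} [MeasurableSpace Y]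
    {ν : Measure Y} {p' : ℝ≥0∞} [Fact (1 ≤ p')] (T : Lp E p μ →L[𝕜] Lp F p' ν) (N : ℕ)
    (x : ℕ → Lp E p μ) (s : Finset ℕ) :
    eLpNorm (rademacherSum N (fun n => ⇑(T (x n))) s) p' ν
      ≤ ‖T‖ₑ * eLpNorm (rademacherSum N (fun n => ⇑(x n)) s) p μ := by
  rw [← eLpNorm_congr_ae (Lp.coeFn_rademacherSum N _ s),
    ← eLpNorm_congr_ae (Lp.coeFn_rademacherSum N x s), ← Lp.enorm_def, ← Lp.enorm_def,
    ← map_rademacherSum]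
  exact T.le_opENorm _

lemma sum_powerset_eLpNorm_rademacherSum_map_rpow_le [Fact (1 ≤ p)] {𝕜 F : Type*}
    [NontriviallyNormedField 𝕜] [NormedSpace 𝕜 E] [NormedAddCommGroup F] [NormedSpace 𝕜 F]
    {Y : Type*} [MeasurableSpace Y] {ν : Measure Y} {p' : ℝ≥0∞} [Fact (1 ≤ p')]
    (T : Lp E p μ →L[𝕜] Lp F p' ν) (N : ℕ) (x : ℕ → Lp E p μ) {r : ℝ} (hr : 0 ≤ r) :
    ∑ s ∈ (range N).powerset, eLpNorm (rademacherSum N (fun n => ⇑(T (x n))) s) p' ν ^ r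
      ≤ ‖T‖ₑ ^ r
          * ∑ s ∈ (range N).powerset, eLpNorm (rademacherSum N (fun n => ⇑(x n)) s) p μ ^ r := by
  rw [mul_sum]
  gcongr with s
  rw [← ENNReal.mul_rpow_of_nonneg _ _ hr]
  gcongr
  exact eLpNorm_rademacherSum_map_le T N x s

end SquareFunction

/-- Commutative case of Lemma 1.4: every bounded operator on `L^p` extends to a bounded
operator on the `ℓ²`-valued space `L^p(X; ℓ²)`, with norm at most `C_p ‖T‖`. -/
theorem bounded_extension_square_function
    (p : ℝ≥0∞) [Fact (1 ≤ p)] (hp' : p ≠ ∞) :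
    ∃ Cp : ℝ, 0 < Cp ∧
      ∀ (X : Type) [MeasurableSpace X] (μ : Measure X)
        (T : Lp ℂ p μ →L[ℂ] Lp ℂ p μ)
        (N : ℕ) (x : ℕ → Lp ℂ p μ),
        eLpNorm
            (fun ω => (∑ m ∈ Finset.range N, ‖(T (x m)) ω‖ ^ 2 : ℝ) ^ (1 / 2 : ℝ)) p μ
          ≤ ENNReal.ofReal (Cp * ‖T‖) *
            eLpNorm
              (fun ω => (∑ m ∈ Finset.range N, ‖(x m) ω‖ ^ 2 : ℝ) ^ (1 / 2 : ℝ)) p μ := by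
  have hp0 : p ≠ 0 := (zero_lt_one.trans_le Fact.out).ne'
  set r := p.toReal
  have hr : 0 < r := ENNReal.toReal_pos hp0 hp'
  obtain ⟨C, hC, hlower⟩ :=
    exists_two_pow_mul_rpow_le_mul_sum_powerset_norm_rademacherSum_rpow hr
  set K := 2 * Real.exp 2 * r ^ r
  refine ⟨(C * K) ^ r⁻¹, by positivity, fun X _ μ T N x => ?_⟩
  have key : 2 ^ N * eLpNorm (squareFunction N fun m => ⇑(T (x m))) p μ ^ r
      ≤ 2 ^ N * (ENNReal.ofReal (C * K)
          * (‖T‖ₑ * eLpNorm (squareFunction N fun m => ⇑(x m)) p μ) ^ r) :=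
    calc _ ≤ ENNReal.ofReal C * ∑ s ∈ (range N).powerset,
            eLpNorm (rademacherSum N (fun m => ⇑(T (x m))) s) p μ ^ r :=
          two_pow_mul_eLpNorm_squareFunction_rpow_le hp0 hp' (hlower N)
            fun _ => Lp.aestronglyMeasurable _
      _ ≤ ENNReal.ofReal C * (‖T‖ₑ ^ r * ∑ s ∈ (range N).powerset,
            eLpNorm (rademacherSum N (fun m => ⇑(x m)) s) p μ ^ r) := by
          gcongr
          exact sum_powerset_eLpNorm_rademacherSum_map_rpow_le T N x hr.le
      _ ≤ ENNReal.ofReal C * (‖T‖ₑ ^ r * (ENNReal.ofReal K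
            * (2 ^ N * eLpNorm (squareFunction N fun m => ⇑(x m)) p μ ^ r))) := by
          gcongr
          exact sum_powerset_eLpNorm_rademacherSum_rpow_le hp0 hp'
            (fun _ => Lp.aestronglyMeasurable _) N
      _ = _ := by
          rw [ENNReal.ofReal_mul hC.le, ENNReal.mul_rpow_of_nonneg _ _ hr.le]
          ring
  rw [ENNReal.ofReal_mul (by positivity), ofReal_norm, mul_assoc]
  exact ENNReal.le_ofReal_rpow_inv_mul_of_rpow_le (by positivity) hr
    ((ENNReal.mul_le_mul_iff_right (by simp) (by simp)).1 key)
end
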